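/- arXiv:1208.2155 — 2 statements merged into one kernel-verified Lean document; each statement's English description precedes it below -/
import Mathlib

section
/- Let m ≥ 2 be an even integer and suppose the continuous coefficients a_γ satisfy (A1) and (A2). Then for every 1 < q < 2 and every smooth compactly supported u : ℝ^{2m} → ℝ, ∫_{ℝ^{2m}} |u|^q dx ≤ (∫_{ℝ^{2m}} 1/a₀(x) dx)^{1/2} · ‖u‖_E + (1/a₀) · ‖u‖_E², where a₀ > 0 is the constant lower bound of a₀(x) from (A1). (From the proof of Lemma 2.1.) -/
open MeasureTheory Real Filter Topology

noncomputable section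

abbrev Euc (n : ℕ) := EuclideanSpace ℝ (Fin n)

/-- The Laplacian of `u : ℝⁿ → ℝ`, computed as the sum of second partial derivatives. -/
noncomputable def lap (n : ℕ) (u : Euc n → ℝ) : Euc n → ℝ :=
  fun x => ∑ i : Fin n,
    fderiv ℝ (fun y => fderiv ℝ u y (EuclideanSpace.single i 1)) x (EuclideanSpace.single i 1)

/-- Iterated Laplacian `Δ^k u`. -/
noncomputable def lapIter (n : ℕ) : ℕ → (Euc n → ℝ) → (Euc n → ℝ)
  | 0 => id
  | k+1 => fun u => lap n (lapIter n k u)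

/-- `|∇^γ u|²`, where `∇^γ u = Δ^{γ/2} u` for even `γ` and `∇^γ u = ∇(Δ^{(γ-1)/2} u)` for odd. -/
noncomputable def gradNormSq (n γ : ℕ) (u : Euc n → ℝ) : Euc n → ℝ :=
  fun x => if γ % 2 = 0 then (lapIter n (γ/2) u x)^2
    else ∑ i : Fin n, (fderiv ℝ (lapIter n (γ/2) u) x (EuclideanSpace.single i 1))^2


lemma contDiff_fderiv_apply {n : ℕ} {u : Euc n → ℝ} (hu : ContDiff ℝ (⊤ : ℕ∞) u) (v : Euc n) :
    ContDiff ℝ (⊤ : ℕ∞) (fun x => fderiv ℝ u x v) :=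
  (hu.fderiv_right (by simp)).clm_apply contDiff_const

lemma contDiff_lap {n : ℕ} {u : Euc n → ℝ} (hu : ContDiff ℝ (⊤ : ℕ∞) u) : ContDiff ℝ (⊤ : ℕ∞) (lap n u) := by
  unfold lap
  exact ContDiff.sum fun i _ => contDiff_fderiv_apply (contDiff_fderiv_apply hu _) _

lemma contDiff_lapIter {n : ℕ} (k : ℕ) {u : Euc n → ℝ} (hu : ContDiff ℝ (⊤ : ℕ∞) u) :
    ContDiff ℝ (⊤ : ℕ∞) (lapIter n k u) := by
  induction k with
  | zero => exact hu
  | succ k ih => exact contDiff_lap ih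

lemma hcs_fderiv_apply {n : ℕ} {u : Euc n → ℝ} (hu : HasCompactSupport u) (v : Euc n) :
    HasCompactSupport (fun x => fderiv ℝ u x v) :=
  hu.fderiv_apply ℝ v

lemma hcs_sum {α : Type*} [TopologicalSpace α] {ι : Type*} (s : Finset ι) (f : ι → α → ℝ)
    (h : ∀ i ∈ s, HasCompactSupport (f i)) : HasCompactSupport (fun x => ∑ i ∈ s, f i x) := by
  classical
  induction s using Finset.induction_on with
  | empty => simp only [Finset.sum_empty]; exact HasCompactSupport.zero (α := α) (β := ℝ)
  | insert j s hi ih =>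
      simp only [Finset.sum_insert hi]
      exact (h _ (Finset.mem_insert_self _ _)).add
        (ih fun i his => h i (Finset.mem_insert_of_mem his))

lemma hcs_sq {α : Type*} [TopologicalSpace α] (g : α → ℝ) (hg : HasCompactSupport g) :
    HasCompactSupport (fun x => g x ^ 2) := by
  have : (fun x => g x ^ 2) = g * g := by ext x; simp [Pi.mul_apply, sq]
  rw [this]; exact hg.mul_right

lemma hcs_lapIter {n : ℕ} (k : ℕ) {u : Euc n → ℝ} (hu : HasCompactSupport u) :
    HasCompactSupport (lapIter n k u) := by
  induction k with
  | zero => exact hu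
  | succ k ih =>
      show HasCompactSupport (lap n (lapIter n k u))
      unfold lap
      exact hcs_sum _ _ (fun i _ => hcs_fderiv_apply (hcs_fderiv_apply ih _) _)

lemma gradNormSq_nonneg {n γ : ℕ} {u : Euc n → ℝ} (x : Euc n) : 0 ≤ gradNormSq n γ u x := by
  unfold gradNormSq
  split
  · positivity
  · positivity

lemma gradNormSq_zero {n : ℕ} (u : Euc n → ℝ) (x : Euc n) : gradNormSq n 0 u x = (u x)^2 := by
  simp [gradNormSq, lapIter]

lemma continuous_gradNormSq {n γ : ℕ} {u : Euc n → ℝ} (hu : ContDiff ℝ (⊤ : ℕ∞) u) :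
    Continuous (gradNormSq n γ u) := by
  unfold gradNormSq
  split
  · exact ((contDiff_lapIter _ hu).continuous).pow 2
  · exact continuous_finset_sum _ fun i _ =>
      ((contDiff_fderiv_apply (contDiff_lapIter _ hu) _).continuous).pow 2

lemma hcs_gradNormSq {n γ : ℕ} {u : Euc n → ℝ} (hu : HasCompactSupport u) :
    HasCompactSupport (gradNormSq n γ u) := by
  unfold gradNormSq
  split
  · exact hcs_sq _ (hcs_lapIter _ hu)
  · exact hcs_sum _ _ fun i _ => hcs_sq _ (hcs_fderiv_apply (hcs_lapIter _ hu) _)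

/-- Continuous embedding `E ↪ L^q(ℝ^{2m})` for `1 < q < 2` (from the proof of Lemma 2.1). -/
theorem embedding_Lq (m : ℕ) (hm : 2 ≤ m) (hme : Even m)
    (a : ℕ → Euc (2*m) → ℝ) (hcont : ∀ γ < m, Continuous (a γ))
    (lb : ℕ → ℝ) (hA1 : ∀ γ < m, 0 < lb γ ∧ ∀ x, lb γ ≤ a γ x)
    (hA2 : Integrable (fun x : Euc (2*m) => 1 / a 0 x))
    (q : ℝ) (hq1 : 1 < q) (hq2 : q < 2) :
    ∀ u : Euc (2*m) → ℝ, ContDiff ℝ (⊤ : ℕ∞) u → HasCompactSupport u →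
      (∫ x, |u x| ^ q) ≤ (∫ x, 1 / a 0 x) ^ ((1:ℝ)/2) *
        Real.sqrt (∫ x, (gradNormSq (2*m) m u x +
          ∑ γ ∈ Finset.range m, a γ x * gradNormSq (2*m) γ u x)) +
        (1 / lb 0) * (∫ x, (gradNormSq (2*m) m u x +
          ∑ γ ∈ Finset.range m, a γ x * gradNormSq (2*m) γ u x)) := by
  intro u hu hsupp
  have h0m : 0 < m := by omega
  have hlb0 : 0 < lb 0 := (hA1 0 h0m).1
  have ha0 : ∀ x, lb 0 ≤ a 0 x := (hA1 0 h0m).2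
  have ha0pos : ∀ x, 0 < a 0 x := fun x => lt_of_lt_of_le hlb0 (ha0 x)
  have ha0c : Continuous (a 0) := hcont 0 h0m
  set F : Euc (2*m) → ℝ := fun x => gradNormSq (2*m) m u x +
      ∑ γ ∈ Finset.range m, a γ x * gradNormSq (2*m) γ u x with hF
  -- continuity / support / integrability of F
  have hFc : Continuous F := (continuous_gradNormSq hu).add
    (continuous_finset_sum _ fun γ hγ =>
      ((hcont γ (Finset.mem_range.mp hγ)).mul (continuous_gradNormSq hu)))
  have hFs : HasCompactSupport F := (hcs_gradNormSq hsupp).add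
    (hcs_sum _ _ fun γ _ => HasCompactSupport.mul_left (hcs_gradNormSq hsupp))
  have hFint : Integrable F := hFc.integrable_of_hasCompactSupport hFs
  have hFpt : ∀ x, a 0 x * (u x)^2 ≤ F x := by
    intro x
    have h1 : a 0 x * (u x)^2 ≤ ∑ γ ∈ Finset.range m, a γ x * gradNormSq (2*m) γ u x := by
      have := Finset.single_le_sum (f := fun γ => a γ x * gradNormSq (2*m) γ u x)
        (fun γ hγ => mul_nonneg
          (le_trans (hA1 γ (Finset.mem_range.mp hγ)).1.le ((hA1 γ (Finset.mem_range.mp hγ)).2 x))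
          (gradNormSq_nonneg x)) (Finset.mem_range.mpr h0m)
      simpa [gradNormSq_zero] using this
    have h2 : (0:ℝ) ≤ gradNormSq (2*m) m u x := gradNormSq_nonneg x
    simp only [hF]; linarith
  have hFnn : ∀ x, 0 ≤ F x := fun x =>
    le_trans (mul_nonneg (ha0pos x).le (sq_nonneg _)) (hFpt x)
  have hIF : 0 ≤ ∫ x, F x := integral_nonneg hFnn
  -- integrability of a0 * u^2
  have haUc : Continuous (fun x => a 0 x * (u x)^2) := ha0c.mul (hu.continuous.pow 2)
  have haUs : HasCompactSupport (fun x => a 0 x * (u x)^2) :=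
    HasCompactSupport.mul_left (hcs_sq _ hsupp)
  have haUint : Integrable (fun x => a 0 x * (u x)^2) :=
    haUc.integrable_of_hasCompactSupport haUs
  have key1 : ∫ x, a 0 x * (u x)^2 ≤ ∫ x, F x := integral_mono haUint hFint hFpt
  have haUnn : 0 ≤ ∫ x, a 0 x * (u x)^2 :=
    integral_nonneg fun x => mul_nonneg (ha0pos x).le (sq_nonneg _)
  -- integrability of u^2, |u|, |u|^q
  have hu2int : Integrable (fun x => (u x)^2) :=
    (hu.continuous.pow 2).integrable_of_hasCompactSupport (hcs_sq _ hsupp)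
  have huabsint : Integrable (fun x => |u x|) :=
    hu.continuous.abs.integrable_of_hasCompactSupport hsupp.abs
  have hqpos : 0 < q := lt_trans one_pos hq1
  have huqint : Integrable (fun x => |u x| ^ q) := by
    apply Continuous.integrable_of_hasCompactSupport
    · exact hu.continuous.abs.rpow_const (fun x => Or.inr hqpos.le)
    · exact hsupp.comp_left (g := fun t : ℝ => |t| ^ q)
        (by simp [Real.zero_rpow hqpos.ne'])
  -- pointwise |u|^q ≤ |u| + u^2
  have hpt : ∀ x, |u x| ^ q ≤ |u x| + (u x)^2 := by
    intro x
    set t := |u x| with ht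
    have htnn : 0 ≤ t := abs_nonneg _
    have ht2 : (u x)^2 = t^2 := (sq_abs _).symm
    rw [ht2]
    rcases le_or_gt t 1 with h | h
    · rcases eq_or_lt_of_le htnn with h0 | h0
      · rw [← h0]; simp [Real.zero_rpow hqpos.ne']
      · have : t ^ q ≤ t ^ (1:ℝ) :=
          Real.rpow_le_rpow_of_exponent_ge h0 h hq1.le
        rw [Real.rpow_one] at this
        nlinarith [sq_nonneg t]
    · have : t ^ q ≤ t ^ (2:ℝ) :=
        Real.rpow_le_rpow_of_exponent_le h.le hq2.le
      rw [show (2:ℝ) = ((2:ℕ):ℝ) by norm_num, Real.rpow_natCast] at this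
      linarith
  have step1 : (∫ x, |u x| ^ q) ≤ (∫ x, |u x|) + ∫ x, (u x)^2 := by
    calc (∫ x, |u x| ^ q) ≤ ∫ x, (|u x| + (u x)^2) :=
          integral_mono huqint (huabsint.add hu2int) hpt
      _ = (∫ x, |u x|) + ∫ x, (u x)^2 := integral_add huabsint hu2int
  -- Cauchy–Schwarz
  have hpq : (2:ℝ).HolderConjugate 2 := by exact Real.HolderConjugate.two_two
  set f : Euc (2*m) → ℝ := fun x => Real.sqrt (1 / a 0 x) with hfdef
  set g : Euc (2*m) → ℝ := fun x => Real.sqrt (a 0 x) * |u x| with hgdef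
  have hfc : Continuous f := (continuous_const.div ha0c fun x => (ha0pos x).ne').sqrt
  have hgc : Continuous g := (ha0c.sqrt).mul hu.continuous.abs
  have hgs : HasCompactSupport g := HasCompactSupport.mul_left hsupp.abs
  have hfsq : ∀ x, f x ^ (2:ℝ) = 1 / a 0 x := by
    intro x
    rw [show (2:ℝ) = ((2:ℕ):ℝ) by norm_num, Real.rpow_natCast]
    exact Real.sq_sqrt (one_div_pos.mpr (ha0pos x)).le
  have hgsq : ∀ x, g x ^ (2:ℝ) = a 0 x * (u x)^2 := by
    intro x
    rw [show (2:ℝ) = ((2:ℕ):ℝ) by norm_num, Real.rpow_natCast]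
    rw [hgdef, mul_pow, Real.sq_sqrt (ha0pos x).le, sq_abs]
  have hfmem : MemLp f (ENNReal.ofReal 2) := by
    rw [show ENNReal.ofReal 2 = 2 by norm_num]
    refine (memLp_two_iff_integrable_sq hfc.aestronglyMeasurable).mpr ?_
    apply hA2.congr
    filter_upwards with x
    rw [← hfsq x, show (2:ℝ) = ((2:ℕ):ℝ) by norm_num, Real.rpow_natCast]
  have hgmem : MemLp g (ENNReal.ofReal 2) := by
    rw [show ENNReal.ofReal 2 = 2 by norm_num]
    exact hgc.memLp_of_hasCompactSupport hgs
  have hCS := integral_mul_le_Lp_mul_Lq_of_nonneg hpq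
    (Filter.Eventually.of_forall fun x => Real.sqrt_nonneg _)
    (Filter.Eventually.of_forall fun x =>
      mul_nonneg (Real.sqrt_nonneg _) (abs_nonneg _)) hfmem hgmem
  have hfg : ∀ x, f x * g x = |u x| := by
    intro x
    rw [hfdef, hgdef, ← mul_assoc, ← Real.sqrt_mul (one_div_pos.mpr (ha0pos x)).le,
      one_div, inv_mul_cancel₀ (ha0pos x).ne', Real.sqrt_one, one_mul]
  have step2 : (∫ x, |u x|) ≤ (∫ x, 1 / a 0 x) ^ ((1:ℝ)/2) * Real.sqrt (∫ x, F x) := by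
    have h1 : (∫ x, |u x|) = ∫ x, f x * g x := by
      congr 1; ext x; rw [hfg]
    have h2 : (∫ x, f x ^ (2:ℝ)) = ∫ x, 1 / a 0 x := by
      congr 1; ext x; rw [hfsq]
    have h3 : (∫ x, g x ^ (2:ℝ)) = ∫ x, a 0 x * (u x)^2 := by
      congr 1; ext x; rw [hgsq]
    rw [h1]
    refine le_trans hCS ?_
    rw [h2, h3]
    apply mul_le_mul_of_nonneg_left
    · rw [← Real.sqrt_eq_rpow]
      exact Real.sqrt_le_sqrt key1
    · exact Real.rpow_nonneg (integral_nonneg fun x => (one_div_pos.mpr (ha0pos x)).le) _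
  have step3 : (∫ x, (u x)^2) ≤ (1 / lb 0) * ∫ x, F x := by
    have hpt2 : ∀ x, (u x)^2 ≤ (1 / lb 0) * (a 0 x * (u x)^2) := by
      intro x
      rw [one_div]
      have h1 : 1 ≤ (lb 0)⁻¹ * a 0 x := by
        rw [inv_mul_eq_div, le_div_iff₀ hlb0]; linarith [ha0 x]
      calc (u x)^2 = 1 * (u x)^2 := (one_mul _).symm
        _ ≤ ((lb 0)⁻¹ * a 0 x) * (u x)^2 :=
            mul_le_mul_of_nonneg_right h1 (sq_nonneg _)
        _ = (lb 0)⁻¹ * (a 0 x * (u x)^2) := by ring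
    calc (∫ x, (u x)^2) ≤ ∫ x, (1 / lb 0) * (a 0 x * (u x)^2) :=
          integral_mono hu2int (haUint.const_mul _) hpt2
      _ = (1 / lb 0) * ∫ x, a 0 x * (u x)^2 := integral_const_mul _ _
      _ ≤ (1 / lb 0) * ∫ x, F x := by
          apply mul_le_mul_of_nonneg_left key1 (by positivity)
  calc (∫ x, |u x| ^ q) ≤ (∫ x, |u x|) + ∫ x, (u x)^2 := step1
    _ ≤ (∫ x, 1 / a 0 x) ^ ((1:ℝ)/2) * Real.sqrt (∫ x, F x) + (1 / lb 0) * ∫ x, F x :=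
        add_le_add step2 step3
end
end

section
/- Let m ≥ 2 be an integer and let 1 ≤ l ≤ m−1. For every x ∈ ℝ^{2m} with x ≠ 0, the l-fold iterated Laplacian of the function x ↦ log|x| satisfies Δ^l (log|x|) = (−1)^{l−1} · 2^{2l−1} · (l−1)! · (m−1)!/(m−l−1)! · |x|^{−2l}. -/
open MeasureTheory Real Filter Topology

noncomputable section

-- congruence
lemma lap_congr {n : ℕ} {u v : Euc n → ℝ} {x : Euc n} (h : u =ᶠ[𝓝 x] v) :
    lap n u x = lap n v x := by
  unfold lap
  refine Finset.sum_congr rfl fun i _ => ?_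
  have h2 : (fun y => fderiv ℝ u y (EuclideanSpace.single i 1)) =ᶠ[𝓝 x]
      (fun y => fderiv ℝ v y (EuclideanSpace.single i 1)) := by
    filter_upwards [h.fderiv (𝕜 := ℝ)] with y hy
    rw [hy]
  rw [h2.fderiv_eq]

lemma norm_sq_pos {n : ℕ} {x : Euc n} (hx : x ≠ 0) : 0 < ‖x‖^2 :=
  pow_pos (norm_pos_iff.mpr hx) 2

lemma sum_sq {n : ℕ} (x : Euc n) : ∑ i, (x i)^2 = ‖x‖^2 := by
  rw [EuclideanSpace.norm_eq, Real.sq_sqrt (by positivity)]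
  simp [sq_abs]

lemma lap_radial (n : ℕ) (g g₁ g₂ : ℝ → ℝ)
    (hg1 : ∀ t : ℝ, 0 < t → HasDerivAt g (g₁ t) t)
    (hg2 : ∀ t : ℝ, 0 < t → HasDerivAt g₁ (g₂ t) t)
    (x : Euc n) (hx : x ≠ 0) :
    lap n (fun y => g (‖y‖^2)) x = 4 * ‖x‖^2 * g₂ (‖x‖^2) + 2*n* g₁ (‖x‖^2) := by
  have hqx := norm_sq_pos hx
  have hopen : {y : Euc n | y ≠ 0} ∈ 𝓝 x := (isOpen_compl_singleton).mem_nhds hx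
  unfold lap
  have key : ∀ i : Fin n,
      fderiv ℝ (fun y => fderiv ℝ (fun z => g (‖z‖^2)) y (EuclideanSpace.single i 1)) x
        (EuclideanSpace.single i 1)
      = 4 * g₂ (‖x‖^2) * (x i)^2 + 2 * g₁ (‖x‖^2) := by
    intro i
    have heq : (fun y => fderiv ℝ (fun z => g (‖z‖^2)) y (EuclideanSpace.single i 1)) =ᶠ[𝓝 x]
        (fun y => g₁ (‖y‖^2) * (2 * y i)) := by
      filter_upwards [hopen] with y hy
      have hfd : HasFDerivAt (fun z : Euc n => g (‖z‖^2))
          ((g₁ (‖y‖^2)) • (2 • (innerSL ℝ y))) y :=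
        (hg1 _ (norm_sq_pos hy)).comp_hasFDerivAt y (hasStrictFDerivAt_norm_sq y).hasFDerivAt
      rw [hfd.fderiv]
      simp [real_inner_comm, EuclideanSpace.inner_single_right]
    rw [heq.fderiv_eq]
    have h1 : HasFDerivAt (fun y : Euc n => g₁ (‖y‖^2))
        ((g₂ (‖x‖^2)) • (2 • (innerSL ℝ x))) x :=
      (hg2 _ hqx).comp_hasFDerivAt x (hasStrictFDerivAt_norm_sq x).hasFDerivAt
    have h2 : HasFDerivAt (fun y : Euc n => 2 * y i)
        ((2:ℝ) • (EuclideanSpace.proj i : Euc n →L[ℝ] ℝ)) x :=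
      ((EuclideanSpace.proj i : Euc n →L[ℝ] ℝ).hasFDerivAt).const_mul 2
    have := (h1.mul h2).fderiv
    rw [show (fun y : Euc n => g₁ (‖y‖^2) * (2 * y i)) = (fun y => g₁ (‖y‖^2)) * (fun y => 2 * y i) from rfl, this]
    simp [real_inner_comm, PiLp.proj_apply, EuclideanSpace.inner_single_right]
    ring
  rw [Finset.sum_congr rfl (fun i _ => key i)]
  rw [Finset.sum_add_distrib, Finset.sum_const, ← Finset.mul_sum, sum_sq,
    Finset.card_univ, Fintype.card_fin, nsmul_eq_mul]
  ring

lemma fac_cast (l : ℕ) (h : 1 ≤ l) : (l.factorial : ℝ) = l * ((l-1).factorial : ℝ) := by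
  obtain ⟨k, rfl⟩ : ∃ k, l = k+1 := ⟨l-1, by omega⟩
  simp [Nat.factorial_succ]

lemma sign_cast (l : ℕ) (h : 1 ≤ l) : (-1:ℝ)^l = -(-1:ℝ)^(l-1) := by
  obtain ⟨k, rfl⟩ : ∃ k, l = k+1 := ⟨l-1, by omega⟩
  simp [pow_succ]

lemma two_pow_cast (l : ℕ) (h : 1 ≤ l) : (2:ℝ)^(2*l+1) = 4 * 2^(2*l-1) := by
  obtain ⟨k, rfl⟩ : ∃ k, l = k+1 := ⟨l-1, by omega⟩
  rw [show 2*(k+1)+1 = (2*(k+1)-1)+2 by omega]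
  rw [pow_add]; ring

lemma claim (m : ℕ) (hm : 2 ≤ m) : ∀ l, 1 ≤ l → l ≤ m - 1 → ∀ x : Euc (2*m), x ≠ 0 →
    lapIter (2*m) l (fun y => Real.log ‖y‖) x =
      ((-1:ℝ)^(l-1) * 2^(2*l-1) * ((l-1).factorial : ℝ) * ((m-1).factorial : ℝ) /
        ((m-l-1).factorial : ℝ)) * (‖x‖^2) ^ (-(l:ℤ)) := by
  intro l hl1
  induction l, hl1 using Nat.le_induction with
  | base =>
    intro _ x hx
    have hq := norm_sq_pos hx
    have hlog : (fun y : Euc (2*m) => Real.log ‖y‖)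
        = fun y : Euc (2*m) => (fun t => Real.log t / 2) (‖y‖^2) := by
      funext y
      simp only [Real.log_pow]
      push_cast; ring
    have h1 : ∀ t : ℝ, 0 < t → HasDerivAt (fun t => Real.log t / 2) (t⁻¹ / 2) t :=
      fun t ht => (Real.hasDerivAt_log ht.ne').div_const 2
    have h2 : ∀ t : ℝ, 0 < t → HasDerivAt (fun t : ℝ => t⁻¹ / 2) (-(t^2)⁻¹ / 2) t :=
      fun t ht => (hasDerivAt_inv ht.ne').div_const 2
    have key : lapIter (2*m) 1 (fun y => Real.log ‖y‖) x
        = lap (2*m) (fun y => (fun t => Real.log t / 2) (‖y‖^2)) x := by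
      rw [← hlog]; rfl
    rw [key, lap_radial (2*m) _ _ _ h1 h2 x hx]
    have hfac : ((m-1).factorial : ℝ) = (m-1 : ℕ) * ((m-2).factorial : ℝ) := by
      rw [show m - 1 = (m-2)+1 by omega, Nat.factorial_succ]
      push_cast; ring
    have hc : ((m-1 : ℕ) : ℝ) = (m:ℝ) - 1 := by
      push_cast [Nat.cast_sub (show 1 ≤ m by omega)]; ring
    rw [hfac, hc]
    rw [show (1:ℕ)-1 = 0 from rfl, show 2*1-1 = 1 from rfl, show m-1-1 = m-2 by omega,
      zpow_neg, zpow_natCast, pow_one]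
    have hfne : ((m-2).factorial : ℝ) ≠ 0 := Nat.cast_ne_zero.mpr (m-2).factorial_ne_zero
    field_simp
    push_cast
    ring
  | succ l hl1 ih =>
    intro hlm x hx
    have hq := norm_sq_pos hx
    have hopen : {y : Euc (2*m) | y ≠ 0} ∈ 𝓝 x := (isOpen_compl_singleton).mem_nhds hx
    set C : ℝ := (-1:ℝ)^(l-1) * 2^(2*l-1) * ((l-1).factorial : ℝ) * ((m-1).factorial : ℝ) /
        ((m-l-1).factorial : ℝ) with hC
    have heq : lapIter (2*m) l (fun y => Real.log ‖y‖) =ᶠ[𝓝 x]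
        (fun y : Euc (2*m) => C * (‖y‖^2) ^ (-(l:ℤ))) := by
      filter_upwards [hopen] with y hy
      exact ih (by omega) y hy
    have hstep : lapIter (2*m) (l+1) (fun y => Real.log ‖y‖) x
        = lap (2*m) (lapIter (2*m) l (fun y => Real.log ‖y‖)) x := rfl
    rw [hstep, lap_congr heq]
    have h1 : ∀ t : ℝ, 0 < t → HasDerivAt (fun t : ℝ => C * t ^ (-(l:ℤ)))
        (C * ((-(l:ℝ)) * t ^ (-(l:ℤ) - 1))) t := by
      intro t ht
      have := (hasDerivAt_zpow (-(l:ℤ)) t (Or.inl ht.ne')).const_mul C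
      exact this.congr_deriv (by push_cast; ring)
    have h2 : ∀ t : ℝ, 0 < t → HasDerivAt (fun t : ℝ => C * ((-(l:ℝ)) * t ^ (-(l:ℤ) - 1)))
        (C * ((-(l:ℝ)) * ((-(l:ℝ)) - 1) * t ^ (-(l:ℤ) - 1 - 1))) t := by
      intro t ht
      have := ((hasDerivAt_zpow (-(l:ℤ) - 1) t (Or.inl ht.ne')).const_mul
        ((-(l:ℝ)))).const_mul C
      exact this.congr_deriv (by push_cast; ring)
    have hrad : lap (2*m) (fun y : Euc (2*m) => C * (‖y‖^2) ^ (-(l:ℤ))) x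
        = 4 * ‖x‖^2 * (C * ((-(l:ℝ)) * ((-(l:ℝ)) - 1) * (‖x‖^2) ^ (-(l:ℤ) - 1 - 1)))
          + 2*(2*m : ℕ) * (C * ((-(l:ℝ)) * (‖x‖^2) ^ (-(l:ℤ) - 1))) :=
      lap_radial (2*m) _ _ _ h1 h2 x hx
    rw [hrad]
    -- now pure algebra
    set q : ℝ := ‖x‖^2
    have hqne : q ≠ 0 := hq.ne'
    have e1 : q ^ (-(l:ℤ) - 1 - 1) = (q ^ (l+2))⁻¹ := by
      rw [show -(l:ℤ) - 1 - 1 = -((l+2 : ℕ) : ℤ) by push_cast; ring, zpow_neg, zpow_natCast]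
    have e2 : q ^ (-(l:ℤ) - 1) = (q ^ (l+1))⁻¹ := by
      rw [show -(l:ℤ) - 1 = -((l+1 : ℕ) : ℤ) by push_cast; ring, zpow_neg, zpow_natCast]
    have e3 : q ^ (-((l:ℕ)+1:ℤ)) = (q ^ (l+1))⁻¹ := by
      rw [show -((l:ℕ)+1:ℤ) = -((l+1 : ℕ) : ℤ) by push_cast; ring, zpow_neg, zpow_natCast]
    rw [e1, e2]
    rw [show l+1-1 = l from rfl, show 2*(l+1)-1 = 2*l+1 by omega, show m-(l+1)-1 = m-l-2 by omega]
    push_cast [e3]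
    have hfacm : ((m-l-1).factorial : ℝ) = ((m:ℝ) - l - 1) * ((m-l-2).factorial : ℝ) := by
      rw [show m-l-1 = (m-l-2)+1 by omega, Nat.factorial_succ]
      push_cast [Nat.cast_sub (show 2 ≤ m - l by omega), Nat.cast_sub (show l ≤ m by omega)]
      ring
    have hfacl := fac_cast l hl1
    have hsign := sign_cast l hl1
    have h2pow := two_pow_cast l hl1
    have hqpow : q ^ (l+2) = q ^ (l+1) * q := by rw [pow_succ]
    rw [hC, hfacm, hfacl, hsign, h2pow, hqpow]
    have hF3 : ((m-l-2).factorial : ℝ) ≠ 0 := Nat.cast_ne_zero.mpr (m-l-2).factorial_ne_zero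
    have hml : (m:ℝ) - l - 1 ≠ 0 := by
      have : (l:ℝ) + 2 ≤ m := by exact_mod_cast (show l+2 ≤ m by omega)
      nlinarith
    field_simp
    ring

/-- Iterated Laplacian of `log|x|` on `ℝ^{2m} \ {0}`:
`Δ^l log|x| = (-1)^{l-1} 2^{2l-1} (l-1)! (m-1)!/(m-l-1)! |x|^{-2l}`. -/
theorem lapIter_log_norm (m : ℕ) (hm : 2 ≤ m) (l : ℕ) (hl1 : 1 ≤ l) (hl : l ≤ m - 1) :
    ∀ x : Euc (2*m), x ≠ 0 →
      lapIter (2*m) l (fun y => Real.log ‖y‖) x =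
        (-1 : ℝ)^(l-1) * 2^(2*l-1) * ((l-1).factorial : ℝ) * ((m-1).factorial : ℝ) /
          ((m-l-1).factorial : ℝ) * ‖x‖ ^ (-(2 * (l : ℝ))) := by
  intro x hx
  rw [claim m hm l hl1 hl x hx]
  congr 1
  have hxp : (0:ℝ) < ‖x‖ := norm_pos_iff.mpr hx
  rw [zpow_neg, zpow_natCast, ← pow_mul,
    show (-(2 * (l:ℝ))) = -((2*l : ℕ) : ℝ) by push_cast; ring,
    Real.rpow_neg hxp.le, Real.rpow_natCast]
end
end
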